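/- Let ℓ ≥ 1, γ ∈ (0,1), ε ≥ 0, z ∈ {0,1}^ℓ, and let p, q be as in the LP instance. Then 1 − γ is the maximum (attained) of R = Σ_{y∈Y} r_y p_y over all feasible vectors r : Y → [0,1], i.e., over all r with e^{−ε} q_y R ≤ r_y p_y ≤ e^{ε} q_y R for every y ∈ Y. -/

import Mathlib

open scoped Classical

noncomputable section

/-- Feasibility for the credit-retrofitting linear program: `r : Y → [0,1]` and, with
`R = Σ_y r_y p_y`, for every `y` we have `e^{-ε} q_y R ≤ r_y p_y ≤ e^{ε} q_y R`. -/
def lpFeasible {Y : Type*} [Fintype Y] (ε : ℝ) (p q r : Y → ℝ) : Prop :=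
  (∀ y, r y ∈ Set.Icc (0 : ℝ) 1) ∧
  ∀ y, Real.exp (-ε) * q y * (∑ y', r y' * p y') ≤ r y * p y ∧
       r y * p y ≤ Real.exp ε * q y * (∑ y', r y' * p y')

/-- The counterfactual distribution `q` of the LP instance: uniform on `{0,1}^{ℓ+1}`. -/
def lpQ (ℓ : ℕ) : (Fin (ℓ + 1) → Bool) → ℝ := fun _ => (1 / 2) ^ (ℓ + 1)

/-- The distribution `p` of the LP instance: uniform except on `z∥0` and `z∥1`. -/
def lpP (ℓ : ℕ) (γ ε : ℝ) (z : Fin ℓ → Bool) : (Fin (ℓ + 1) → Bool) → ℝ := fun y =>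
  if y = Fin.snoc z false then (1 / 2) ^ (ℓ + 1) * (Real.exp (-ε) * (1 - γ))
  else if y = Fin.snoc z true then (1 / 2) ^ (ℓ + 1) * (2 - Real.exp (-ε) * (1 - γ))
  else (1 / 2) ^ (ℓ + 1)

/-!
Feasibility at `z∥0`, where `p` is smallest relative to `q`, together with `r ≤ 1` gives
`e^{-ε} q R ≤ p = e^{-ε} q (1 - γ)`, i.e. `R ≤ 1 - γ`. Conversely, let `p⁰` be `p` at `γ = 0`;
the vector `r` with `r p = (1 - γ) p⁰` is feasible with `R = 1 - γ`: `p⁰` is a probability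
distribution whose ratios to `q` lie in `[e^{-ε}, e^ε]` (at `z∥1` because `e^ε + e^{-ε} ≥ 2`),
and `(1 - γ) p⁰ ≤ p` gives `r ≤ 1`.
-/

theorem Fintype.sum_ite_ite_of_ne {Y : Type*} [Fintype Y] [DecidableEq Y] {a b : Y}
    (hab : a ≠ b) (u v w : ℝ) :
    ∑ y, (if y = a then u else if y = b then v else w) =
      (u - w) + (v - w) + Fintype.card Y * w := by
  have hsplit : ∀ y, (if y = a then u else if y = b then v else w) =
      w + (if y = a then u - w else 0) + (if y = b then v - w else 0) := by
    intro y
    by_cases hya : y = a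
    · simp [hya, hab]
    · by_cases hyb : y = b
      · simp [hyb, Ne.symm hab]
      · simp [hya, hyb]
  simp only [hsplit, Finset.sum_add_distrib, Finset.sum_const, Finset.card_univ, nsmul_eq_mul,
    Finset.sum_ite_eq', Finset.mem_univ, if_true]
  ring

theorem lpFeasible.exp_neg_mul_sum_le {Y : Type*} [Fintype Y] {ε : ℝ} {p q r : Y → ℝ}
    (h : lpFeasible ε p q r) {y : Y} (hp : 0 ≤ p y) :
    Real.exp (-ε) * q y * ∑ y', r y' * p y' ≤ p y :=
  (h.2 y).1.trans (mul_le_of_le_one_left hp (h.1 y).2)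

theorem lpFeasible_mul_div {Y : Type*} [Fintype Y] {ε t : ℝ} {p q s : Y → ℝ}
    (hp : ∀ y, 0 < p y) (ht : 0 ≤ t) (hs : ∑ y, s y = 1) (hs0 : ∀ y, 0 ≤ s y)
    (hsp : ∀ y, t * s y ≤ p y)
    (hband : ∀ y, Real.exp (-ε) * q y ≤ s y ∧ s y ≤ Real.exp ε * q y) :
    lpFeasible ε p q (fun y => t * s y / p y) ∧ ∑ y, t * s y / p y * p y = t := by
  have hmul : ∀ y, t * s y / p y * p y = t * s y := fun y => div_mul_cancel₀ _ (hp y).ne'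
  have hsum : ∑ y, t * s y / p y * p y = t := by
    simp only [hmul, ← Finset.mul_sum, hs, mul_one]
  refine ⟨⟨fun y => ⟨div_nonneg (mul_nonneg ht (hs0 y)) (hp y).le,
    (div_le_one (hp y)).2 (hsp y)⟩, fun y => ?_⟩, hsum⟩
  rw [hsum, hmul]
  constructor
  · linarith [mul_le_mul_of_nonneg_left (hband y).1 ht]
  · linarith [mul_le_mul_of_nonneg_left (hband y).2 ht]

theorem snoc_false_ne_snoc_true {ℓ : ℕ} (z : Fin ℓ → Bool) :
    (Fin.snoc z false : Fin (ℓ + 1) → Bool) ≠ Fin.snoc z true := by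
  intro h
  simpa using congrFun h (Fin.last ℓ)

theorem sum_lpP (ℓ : ℕ) (γ ε : ℝ) (z : Fin ℓ → Bool) : ∑ y, lpP ℓ γ ε z y = 1 := by
  unfold lpP
  rw [Fintype.sum_ite_ite_of_ne (snoc_false_ne_snoc_true z)]
  simp only [Fintype.card_fun, Fintype.card_bool, Fintype.card_fin]
  have hcard : ((2 : ℕ) : ℝ) ^ (ℓ + 1) * (1 / 2) ^ (ℓ + 1) = 1 := by
    rw [← mul_pow]; norm_num
  push_cast at hcard ⊢
  linear_combination hcard

section

variable {ℓ : ℕ} {γ ε : ℝ} {z : Fin ℓ → Bool}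

theorem lpP_pos (hε : 0 ≤ ε) (hγ0 : 0 ≤ γ) (hγ1 : γ < 1) (y : Fin (ℓ + 1) → Bool) :
    0 < lpP ℓ γ ε z y := by
  have hE : Real.exp (-ε) ≤ 1 := Real.exp_le_one_iff.2 (by linarith)
  have hE0 : 0 < Real.exp (-ε) := Real.exp_pos _
  unfold lpP
  split_ifs
  · have : 0 < 1 - γ := by linarith
    positivity
  · have : 0 < 2 - Real.exp (-ε) * (1 - γ) := by nlinarith
    positivity
  · positivity

theorem lpP_snoc_false :
    lpP ℓ γ ε z (Fin.snoc z false) = Real.exp (-ε) * lpQ ℓ (Fin.snoc z false) * (1 - γ) := by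
  simp only [lpP, lpQ, if_true]
  ring

theorem one_sub_mul_lpP_zero_le (hγ : 0 ≤ γ) (y : Fin (ℓ + 1) → Bool) :
    (1 - γ) * lpP ℓ 0 ε z y ≤ lpP ℓ γ ε z y := by
  have hc : (0 : ℝ) < (1 / 2) ^ (ℓ + 1) := by positivity
  unfold lpP
  split_ifs <;> nlinarith

theorem lpP_zero_mem_band (hε : 0 ≤ ε) (y : Fin (ℓ + 1) → Bool) :
    Real.exp (-ε) * lpQ ℓ y ≤ lpP ℓ 0 ε z y ∧ lpP ℓ 0 ε z y ≤ Real.exp ε * lpQ ℓ y := by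
  have hE : Real.exp (-ε) ≤ 1 := Real.exp_le_one_iff.2 (by linarith)
  have hE' : 1 ≤ Real.exp ε := Real.one_le_exp hε
  have hcosh : 2 - Real.exp (-ε) ≤ Real.exp ε := by
    have := Real.one_le_cosh ε
    rw [Real.cosh_eq] at this
    linarith
  have hc : (0 : ℝ) < (1 / 2) ^ (ℓ + 1) := by positivity
  unfold lpP lpQ
  split_ifs <;> constructor <;> nlinarith

end

theorem stmt8_general (ℓ : ℕ) (γ ε : ℝ) (hγ0 : 0 < γ) (hγ1 : γ < 1) (hε : 0 ≤ ε)
    (z : Fin ℓ → Bool) :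
    IsGreatest
      {R : ℝ | ∃ r : (Fin (ℓ + 1) → Bool) → ℝ,
        lpFeasible ε (lpP ℓ γ ε z) (lpQ ℓ) r ∧ R = ∑ y, r y * lpP ℓ γ ε z y}
      (1 - γ) := by
  have hp := lpP_pos (z := z) hε hγ0.le hγ1
  constructor
  · obtain ⟨hfeas, hsum⟩ := lpFeasible_mul_div hp (sub_nonneg.2 hγ1.le) (sum_lpP ℓ 0 ε z)
      (fun y => (lpP_pos hε le_rfl one_pos y).le) (one_sub_mul_lpP_zero_le hγ0.le)
      (lpP_zero_mem_band hε)
    exact ⟨_, hfeas, hsum.symm⟩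
  · rintro _ ⟨r, hr, rfl⟩
    have hbound := hr.exp_neg_mul_sum_le (hp (Fin.snoc z false)).le
    rw [lpP_snoc_false] at hbound
    have hq : 0 < Real.exp (-ε) * lpQ ℓ (Fin.snoc z false) := by
      unfold lpQ; positivity
    exact le_of_mul_le_mul_left hbound hq

/-- For the LP instance given by `lpP` and `lpQ`, `1 - γ` is the attained maximum of
`R = Σ_y r_y p_y` over all feasible `r`. -/
theorem stmt8 (ℓ : ℕ) (hℓ : 1 ≤ ℓ) (γ ε : ℝ) (hγ0 : 0 < γ) (hγ1 : γ < 1) (hε : 0 ≤ ε)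
    (z : Fin ℓ → Bool) :
    IsGreatest
      {R : ℝ | ∃ r : (Fin (ℓ + 1) → Bool) → ℝ,
        lpFeasible ε (lpP ℓ γ ε z) (lpQ ℓ) r ∧ R = ∑ y, r y * lpP ℓ γ ε z y}
      (1 - γ) :=
  stmt8_general ℓ γ ε hγ0 hγ1 hε z
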